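/- arXiv:2304.03068 — 2 statements merged into one kernel-verified Lean document; each statement's English description precedes it below -/
import Mathlib

section
/- Let p be a permutation vector of size n, partitioned as p = (p_T; p_B) with p_T of size k. Then the accumulated permutation matrix satisfies P(p) = diag(I_k, P(p_B)) · P(p_T), where P(p_T) acts on all m coordinates. -/
open Matrix

/-- The permutation matrix of `σ`: entry `(i, j)` is `1` iff `i = σ j`. -/
def permMat {m : ℕ} (σ : Equiv.Perm (Fin m)) : Matrix (Fin m) (Fin m) ℝ :=
  Matrix.of fun i j => if σ j = i then (1 : ℝ) else 0

/-- The `m × m` transposition matrix swapping indices `a` and `b`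
(the identity if `a` or `b` is out of range). -/
def swapMat (m a b : ℕ) : Matrix (Fin m) (Fin m) ℝ :=
  if h : a < m ∧ b < m then permMat (Equiv.swap ⟨a, h.1⟩ ⟨b, h.2⟩) else 1

/-- The accumulated permutation matrix `P(p)` of a permutation vector `p`
acting from offset `k`:
`P(p) = diag(I_{k+n-1}, P(π_{n-1})) ⋯ diag(I_{k+1}, P(π₁)) ⋅ diag(I_k, P(π₀))`,
where `diag(I_j, P(π))` swaps indices `j` and `j + π` of `Fin m`. -/
def accPerm (m : ℕ) : List ℕ → ℕ → Matrix (Fin m) (Fin m) ℝ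
  | [], _ => 1
  | π :: rest, k => accPerm m rest (k + 1) * swapMat m k (k + π)

/-- `p` is a valid permutation vector at offset `k` for `m` rows:
its `i`-th entry `π_i` satisfies `k + i + π_i < m`, i.e. `π_i ∈ {0, …, m-(k+i)-1}`. -/
def ValidPivots (m k : ℕ) (p : List ℕ) : Prop :=
  ∀ i : ℕ, ∀ h : i < p.length, k + i + p.get ⟨i, h⟩ < m

theorem accPerm_append_offset (m : ℕ) (pT pB : List ℕ) (k : ℕ) :
    accPerm m (pT ++ pB) k = accPerm m pB (k + pT.length) * accPerm m pT k := by
  induction pT generalizing k with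
  | nil => simp [accPerm]
  | cons π rest ih =>
    rw [List.cons_append, accPerm, accPerm, ih, mul_assoc, List.length_cons,
      Nat.add_comm rest.length 1, Nat.add_assoc]

theorem accPerm_append_general (m : ℕ) (pT pB : List ℕ) :
    accPerm m (pT ++ pB) 0 = accPerm m pB pT.length * accPerm m pT 0 := by
  simpa using accPerm_append_offset m pT pB 0

/-- If the permutation vector `p` is partitioned as `p = (p_T; p_B)`
with `p_T` of size `k`, then `P(p) = diag(I_k, P(p_B)) ⋅ P(p_T)`. -/
theorem accPerm_append (m : ℕ) (pT pB : List ℕ)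
    (hT : ValidPivots m 0 pT) (hB : ValidPivots m pT.length pB) :
    accPerm m (pT ++ pB) 0 = accPerm m pB pT.length * accPerm m pT 0 :=
  accPerm_append_general m pT pB
end

section
/- An m×n real matrix A with n ≤ m admits a factorization PA = LU — where P is a permutation matrix, L is m×n unit lower trapezoidal (ones on the diagonal, zeros above), and U is n×n upper triangular with all diagonal entries nonzero — if and only if the columns of A are linearly independent. -/
open Matrix

/-- `L` is unit lower trapezoidal: ones on the diagonal, zeros above it. -/
def UnitLowerTrapezoidal {m n : ℕ} (h : n ≤ m) (L : Matrix (Fin m) (Fin n) ℝ) : Prop :=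
  (∀ i : Fin n, L (Fin.castLE h i) i = 1) ∧ ∀ (i : Fin m) (j : Fin n), (i : ℕ) < (j : ℕ) → L i j = 0

/-- `U` is upper triangular. -/
def UpperTriangular {n : ℕ} (U : Matrix (Fin n) (Fin n) ℝ) : Prop :=
  ∀ i j : Fin n, (j : ℕ) < (i : ℕ) → U i j = 0

lemma permMat_mul_apply {m n : ℕ} (σ : Equiv.Perm (Fin m)) (M : Matrix (Fin m) (Fin n) ℝ)
    (i : Fin m) (j : Fin n) : (permMat σ * M) i j = M (σ⁻¹ i) j := by
  simp only [permMat, mul_apply, of_apply, ite_mul, one_mul, zero_mul]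
  rw [Finset.sum_eq_single (σ⁻¹ i)]
  · simp
  · intro k _ hk
    rw [if_neg]
    intro hco
    exact hk (by rw [← hco]; simp)
  · simp

lemma unitLT_mulVec_eq_zero {m n : ℕ} (h : n ≤ m) (L : Matrix (Fin m) (Fin n) ℝ)
    (hL : UnitLowerTrapezoidal h L) (d : Fin n → ℝ) (hd : L *ᵥ d = 0) : d = 0 := by
  obtain ⟨hdiag, hup⟩ := hL
  have key : ∀ N (j : Fin n), (j : ℕ) < N → d j = 0 := by
    intro N
    induction N with
    | zero => intro j hj; omega
    | succ N IH =>
      intro j hj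
      rcases Nat.lt_or_ge (j : ℕ) N with h' | h'
      · exact IH j h'
      have hrow : ∑ k, L (Fin.castLE h j) k * d k = 0 := by
        have := congrFun hd (Fin.castLE h j)
        simpa [mulVec, dotProduct] using this
      have hsum : ∀ k : Fin n, k ∈ Finset.univ → k ≠ j → L (Fin.castLE h j) k * d k = 0 := by
        intro k _ hk
        rcases lt_trichotomy (k : ℕ) (j : ℕ) with hlt | heq | hgt
        · rw [IH k (by omega), mul_zero]
        · exact absurd (Fin.ext heq) hk
        · rw [hup _ _ (by simpa using hgt), zero_mul]
      have hone := Finset.sum_eq_single j hsum (by simp)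
      rw [hone, hdiag j, one_mul] at hrow
      exact hrow
  funext j
  exact key n j j.isLt

lemma upperTri_mulVec_eq_zero {n : ℕ} (U : Matrix (Fin n) (Fin n) ℝ)
    (hU : UpperTriangular U) (hdiag : ∀ i, U i i ≠ 0) (c : Fin n → ℝ)
    (hc : U *ᵥ c = 0) : c = 0 := by
  have key : ∀ N (j : Fin n), n - N ≤ (j : ℕ) → c j = 0 := by
    intro N
    induction N with
    | zero => intro j hj; omega
    | succ N IH =>
      intro j hj
      rcases Nat.lt_or_ge (j : ℕ) (n - N) with h' | h'
      swap
      · exact IH j h'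
      have hrow : ∑ k, U j k * c k = 0 := by
        have := congrFun hc j
        simpa [mulVec, dotProduct] using this
      have hsum : ∀ k : Fin n, k ∈ Finset.univ → k ≠ j → U j k * c k = 0 := by
        intro k _ hk
        rcases lt_trichotomy (k : ℕ) (j : ℕ) with hlt | heq | hgt
        · rw [hU j k hlt, zero_mul]
        · exact absurd (Fin.ext heq) hk
        · rw [IH k (by omega), mul_zero]
      have hone := Finset.sum_eq_single j hsum (by simp)
      rw [hone] at hrow
      exact (mul_eq_zero.mp hrow).resolve_left (hdiag j)
  funext j
  exact key n j (by omega)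

lemma li_iff {m n : ℕ} (A : Matrix (Fin m) (Fin n) ℝ) :
    LinearIndependent ℝ (fun j : Fin n => fun i : Fin m => A i j) ↔
      ∀ c : Fin n → ℝ, A *ᵥ c = 0 → c = 0 := by
  rw [Fintype.linearIndependent_iff]
  have hmv : ∀ c : Fin n → ℝ, (∑ j, c j • (fun i : Fin m => A i j)) = A *ᵥ c := by
    intro c
    funext i
    simp [mulVec, dotProduct, Finset.sum_apply, mul_comm]
  constructor
  · intro H c hc
    funext j
    exact H c (by rw [hmv, hc]) j
  · intro H g hg
    intro j
    exact congrFun (H g (by rw [← hmv, hg])) j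

lemma exists_lu : ∀ (n m : ℕ) (h : n ≤ m) (A : Matrix (Fin m) (Fin n) ℝ),
    (∀ c, A *ᵥ c = 0 → c = 0) →
    ∃ (σ : Equiv.Perm (Fin m)) (L : Matrix (Fin m) (Fin n) ℝ)
      (U : Matrix (Fin n) (Fin n) ℝ),
      permMat σ * A = L * U ∧ UnitLowerTrapezoidal h L ∧ UpperTriangular U ∧
        ∀ i, U i i ≠ 0 := by
  intro n
  induction n with
  | zero =>
    intro m h A _
    refine ⟨1, of fun _ j => j.elim0, of fun i => i.elim0,
      ?_, ⟨fun i => i.elim0, fun i j => j.elim0⟩, fun i j => j.elim0, fun i => i.elim0⟩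
    ext i j
    exact j.elim0
  | succ n IH =>
    intro m hm A hinj
    obtain ⟨m', rfl⟩ : ∃ m', m = m' + 1 := ⟨m - 1, by omega⟩
    have hm' : n ≤ m' := by omega
    -- find a pivot row
    have hcol : ∃ r, A r 0 ≠ 0 := by
      by_contra hall
      push_neg at hall
      have h1 := hinj (Pi.single 0 1) (by
        funext i
        simp [mulVec, dotProduct, Pi.single_apply, hall])
      have := congrFun h1 0
      simp at this
    obtain ⟨r, hr⟩ := hcol
    set τ : Equiv.Perm (Fin (m' + 1)) := Equiv.swap 0 r with hτdef
    set B : Matrix (Fin (m' + 1)) (Fin (n + 1)) ℝ := of fun i j => A (τ i) j with hBdef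
    have hB : ∀ i j, B i j = A (τ i) j := fun i j => rfl
    have hp : B 0 0 ≠ 0 := by
      rw [hB]
      simpa [hτdef, Equiv.swap_apply_left] using hr
    set f : Fin (m' + 1) → ℝ := fun i => if i = 0 then 0 else B i 0 / B 0 0 with hfdef
    have hf0 : f 0 = 0 := by simp [hfdef]
    have hfs : ∀ i : Fin m', f i.succ = B i.succ 0 / B 0 0 := by
      intro i; simp [hfdef, Fin.succ_ne_zero]
    set A' : Matrix (Fin (m' + 1)) (Fin (n + 1)) ℝ := of fun i j => B i j - f i * B 0 j
      with hA'def
    have hA' : ∀ i j, A' i j = B i j - f i * B 0 j := fun i j => rfl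
    have hA'0 : ∀ j, A' 0 j = B 0 j := by intro j; rw [hA', hf0]; ring
    have hA's0 : ∀ i : Fin m', A' i.succ 0 = 0 := by
      intro i
      rw [hA', hfs, div_mul_cancel₀ _ hp, sub_self]
    set C : Matrix (Fin m') (Fin n) ℝ := of fun i j => A' i.succ j.succ with hCdef
    have hCe : ∀ i j, C i j = A' i.succ j.succ := fun i j => rfl
    -- C has independent columns (in the mulVec sense)
    have hCinj : ∀ d, C *ᵥ d = 0 → d = 0 := by
      intro d hd
      set s : ℝ := ∑ j, A' 0 j.succ * d j with hsdef
      set x : ℝ := -s / B 0 0 with hxdef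
      set c : Fin (n + 1) → ℝ := Fin.cons x d with hcdef
      have hc0 : c 0 = x := rfl
      have hcs : ∀ j : Fin n, c j.succ = d j := fun j => rfl
      have hA'c : A' *ᵥ c = 0 := by
        funext i
        have hexp : (A' *ᵥ c) i = A' i 0 * x + ∑ j, A' i j.succ * d j := by
          simp [mulVec, dotProduct, Fin.sum_univ_succ, hc0, hcs]
        induction i using Fin.cases with
        | zero =>
          rw [Pi.zero_apply, hexp, hA'0, ← hsdef, hxdef]
          field_simp
          ring
        | succ i =>
          rw [Pi.zero_apply, hexp, hA's0, zero_mul, zero_add]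
          have := congrFun hd i
          simpa [mulVec, dotProduct, hCe] using this
      have hBc : B *ᵥ c = 0 := by
        have h0 : ∑ k, B 0 k * c k = 0 := by
          have := congrFun hA'c 0
          simpa [mulVec, dotProduct, hA', hf0] using this
        funext i
        have h1 := congrFun hA'c i
        simp only [mulVec, dotProduct, hA', Pi.zero_apply] at h1 ⊢
        have hsplit : ∑ k, (B i k - f i * B 0 k) * c k
            = (∑ k, B i k * c k) - f i * ∑ k, B 0 k * c k := by
          rw [Finset.mul_sum, ← Finset.sum_sub_distrib]
          congr 1
          funext k
          ring
        rw [hsplit, h0, mul_zero, sub_zero] at h1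
        exact h1
      have hAc : A *ᵥ c = 0 := by
        funext i
        have := congrFun hBc (τ⁻¹ i)
        simpa [mulVec, dotProduct, hB, Equiv.Perm.inv_def, Equiv.apply_symm_apply] using this
      have hc0' := hinj c hAc
      funext j
      have := congrFun hc0' j.succ
      simpa [hcs] using this
    obtain ⟨σ', L', U', hfac', hL', hU', hd'⟩ := IH m' hm' C hCinj
    -- extend σ' to Fin (m'+1), fixing 0
    set σe : Equiv.Perm (Fin (m' + 1)) :=
      ⟨Fin.cases 0 (fun i => (σ' i).succ), Fin.cases 0 (fun i => (σ'.symm i).succ),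
        by
          intro i
          induction i using Fin.cases <;> simp,
        by
          intro i
          induction i using Fin.cases <;> simp⟩ with hσedef
    have hσe0 : σe.symm 0 = 0 := rfl
    have hσes : ∀ i : Fin m', σe.symm i.succ = (σ'.symm i).succ := fun i => rfl
    set σ : Equiv.Perm (Fin (m' + 1)) := σe * τ with hσdef
    have hσinv : ∀ i, σ⁻¹ i = τ (σe.symm i) := by
      intro i
      simp [hσdef, _root_.mul_inv_rev, Equiv.Perm.mul_apply, Equiv.Perm.inv_def, hτdef,
        Equiv.symm_swap]
    -- define L and U
    set L : Matrix (Fin (m' + 1)) (Fin (n + 1)) ℝ :=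
      of (Fin.cases (motive := fun _ => Fin (n+1) → ℝ) (Fin.cons 1 fun _ => 0)
        (fun i => Fin.cons (f ((σ'.symm i).succ)) fun j => L' i j)) with hLdef
    set U : Matrix (Fin (n + 1)) (Fin (n + 1)) ℝ :=
      of (Fin.cases (motive := fun _ => Fin (n+1) → ℝ) (fun j => B 0 j) (fun i => Fin.cons 0 fun j => U' i j)) with hUdef
    have hL00 : L 0 0 = 1 := rfl
    have hL0s : ∀ j : Fin n, L 0 j.succ = 0 := fun j => by
      show (Fin.cases (motive := fun _ => Fin (n+1) → ℝ) (Fin.cons 1 fun _ => 0)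
        (fun i => Fin.cons (f ((σ'.symm i).succ)) fun j => L' i j) (0 : Fin (m'+1))) j.succ = 0
      simp
    have hLs0 : ∀ i : Fin m', L i.succ 0 = f ((σ'.symm i).succ) := fun i => by
      show (Fin.cases (motive := fun _ => Fin (n+1) → ℝ) (Fin.cons 1 fun _ => 0)
        (fun i => Fin.cons (f ((σ'.symm i).succ)) fun j => L' i j) i.succ) 0
          = f ((σ'.symm i).succ)
      simp
    have hLss : ∀ (i : Fin m') (j : Fin n), L i.succ j.succ = L' i j := fun i j => by
      show (Fin.cases (motive := fun _ => Fin (n+1) → ℝ) (Fin.cons 1 fun _ => 0)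
        (fun i => Fin.cons (f ((σ'.symm i).succ)) fun j => L' i j) i.succ) j.succ = L' i j
      simp
    have hU0 : ∀ j, U 0 j = B 0 j := fun j => by
      show (Fin.cases (motive := fun _ => Fin (n+1) → ℝ) (fun j => B 0 j)
        (fun i => Fin.cons 0 fun j => U' i j) (0 : Fin (n+1))) j = B 0 j
      simp
    have hUs0 : ∀ i : Fin n, U i.succ 0 = 0 := fun i => by
      show (Fin.cases (motive := fun _ => Fin (n+1) → ℝ) (fun j => B 0 j)
        (fun i => Fin.cons 0 fun j => U' i j) i.succ) 0 = 0
      simp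
    have hUss : ∀ i j : Fin n, U i.succ j.succ = U' i j := fun i j => by
      show (Fin.cases (motive := fun _ => Fin (n+1) → ℝ) (fun j => B 0 j)
        (fun i => Fin.cons 0 fun j => U' i j) i.succ) j.succ = U' i j
      simp
    refine ⟨σ, L, U, ?_, ⟨?_, ?_⟩, ?_, ?_⟩
    · -- the factorization
      ext i j
      rw [permMat_mul_apply, hσinv]
      have hLU : (L * U) i j = L i 0 * U 0 j + ∑ k : Fin n, L i k.succ * U k.succ j := by
        simp [mul_apply, Fin.sum_univ_succ]
      induction i using Fin.cases with
      | zero =>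
        rw [hσe0, hLU, hL00, one_mul, hU0]
        have : ∑ k : Fin n, L 0 k.succ * U k.succ j = 0 := by
          apply Finset.sum_eq_zero
          intro k _
          rw [hL0s, zero_mul]
        rw [this, add_zero]
        exact (hB _ _).symm
      | succ i =>
        rw [hσes, hLU, hLs0]
        have hCfac : ∀ j' : Fin n, A' ((σ'.symm i).succ) j'.succ = ∑ k, L' i k * U' k j' := by
          intro j'
          have h2 := congrFun (congrFun hfac' i) j'
          rw [permMat_mul_apply, mul_apply, Equiv.Perm.inv_def] at h2
          rw [← hCe]
          exact h2
        induction j using Fin.cases with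
        | zero =>
          have : ∑ k : Fin n, L' i k * U k.succ 0 = 0 := by
            apply Finset.sum_eq_zero
            intro k _
            rw [hUs0, mul_zero]
          simp only [hLss] at *
          rw [this, add_zero, hU0, hfs, div_mul_cancel₀ _ hp]
          exact (hB _ _).symm
        | succ j =>
          simp only [hLss, hUss, hU0]
          rw [← hCfac j, hA', ← hB]
          ring
    · -- unit diagonal of L
      intro i
      induction i using Fin.cases with
      | zero =>
        have : Fin.castLE hm (0 : Fin (n+1)) = 0 := rfl
        rw [this, hL00]
      | succ i =>
        have : Fin.castLE hm i.succ = (Fin.castLE hm' i).succ := rfl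
        rw [this, hLss]
        exact hL'.1 i
    · -- zeros above diagonal of L
      intro i j hij
      induction j using Fin.cases with
      | zero => exact absurd hij (by simp)
      | succ j =>
        induction i using Fin.cases with
        | zero => exact hL0s j
        | succ i =>
          rw [hLss]
          exact hL'.2 i j (by simpa using hij)
    · -- U upper triangular
      intro i j hij
      induction i using Fin.cases with
      | zero => exact absurd hij (by simp)
      | succ i =>
        induction j using Fin.cases with
        | zero => exact hUs0 i
        | succ j =>
          rw [hUss]
          exact hU' i j (by simpa using hij)
    · -- nonzero diagonal of U
      intro i
      induction i using Fin.cases with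
      | zero => rw [hU0]; exact hp
      | succ i => rw [hUss]; exact hd' i

/-- An `m × n` real matrix `A` with `n ≤ m` admits a factorization
`P A = L U` with `P` a permutation matrix, `L` unit lower trapezoidal, and `U`
upper triangular with nonzero diagonal, if and only if the columns of `A` are
linearly independent. -/
theorem luPiv_exists_iff_linearIndependent {m n : ℕ} (h : n ≤ m)
    (A : Matrix (Fin m) (Fin n) ℝ) :
    (∃ (σ : Equiv.Perm (Fin m)) (L : Matrix (Fin m) (Fin n) ℝ)
        (U : Matrix (Fin n) (Fin n) ℝ),
      permMat σ * A = L * U ∧ UnitLowerTrapezoidal h L ∧ UpperTriangular U ∧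
        ∀ i, U i i ≠ 0) ↔
    LinearIndependent ℝ (fun j : Fin n => fun i : Fin m => A i j) := by
  rw [li_iff]
  constructor
  · rintro ⟨σ, L, U, hfac, hL, hU, hdiag⟩ c hc
    have h1 : L *ᵥ (U *ᵥ c) = 0 := by
      rw [mulVec_mulVec, ← hfac, ← mulVec_mulVec, hc, mulVec_zero]
    exact upperTri_mulVec_eq_zero U hU hdiag c (unitLT_mulVec_eq_zero h L hL _ h1)
  · exact exists_lu n m h A
end
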